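/- arXiv:2404.11455 — 4 statements merged into one kernel-verified Lean document; each statement's English description precedes it below -/
import Mathlib

section
/- For every g ∈ 𝒞, the function Tg is strictly decreasing and convex with (Tg)(0) = 1 and (Tg)(1) = 0, it satisfies (Tg)(x) < 1 − x for all x ∈ (0,1), and the two-sided bound 1 − x/(∫₀¹ g) ≤ (Tg)(x) ≤ 1 − x holds for all x ∈ [0,1]. -/
open Set MeasureTheory Filter intervalIntegral

noncomputable section

/-- The class ℰ of decreasing functions `f : [0,1] → [0,1]` with `f 0 = 1` and positive area. -/
def MemE (f : ℝ → ℝ) : Prop :=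
  (∀ x ∈ Icc (0:ℝ) 1, f x ∈ Icc (0:ℝ) 1) ∧
  AntitoneOn f (Icc 0 1) ∧ f 0 = 1 ∧ 0 < ∫ x in (0:ℝ)..1, f x

/-- Pseudo-inverse: `f* y = sup {x ∈ [0,1] | f x ≥ y}`. -/
def pseudoInv (f : ℝ → ℝ) (y : ℝ) : ℝ :=
  sSup {x | x ∈ Icc (0:ℝ) 1 ∧ y ≤ f x}

/-- The operator `T`: `(Tf)(x) = (∫ₓ¹ f*) / (∫₀¹ f)`. -/
def Tmap (f : ℝ → ℝ) : ℝ → ℝ :=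
  fun x => (∫ y in x..1, pseudoInv f y) / ∫ t in (0:ℝ)..1, f t

/-- The operator `I`: `(Ig)(x) = (∫ₓ¹ g) / (∫₀¹ g)`. -/
def Imap (g : ℝ → ℝ) : ℝ → ℝ :=
  fun x => (∫ t in x..1, g t) / ∫ t in (0:ℝ)..1, g t

/-- The class 𝒞: continuous members of ℰ vanishing at 1. -/
def MemC (f : ℝ → ℝ) : Prop := MemE f ∧ ContinuousOn f (Icc 0 1) ∧ f 1 = 0

/-- The class 𝒞̆: convex members of 𝒞. -/
def MemCconv (f : ℝ → ℝ) : Prop := MemC f ∧ ConvexOn ℝ (Icc 0 1) f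

/-- The class 𝒟: strictly decreasing members of 𝒞. -/
def MemD (f : ℝ → ℝ) : Prop := MemC f ∧ StrictAntiOn f (Icc 0 1)

/-- The class 𝒟̆ = 𝒟 ∩ 𝒞̆. -/
def MemDconv (f : ℝ → ℝ) : Prop := MemD f ∧ ConvexOn ℝ (Icc 0 1) f

/-- The stride `σ g = sup {α ≥ 0 | α - x ≤ α * g x for all x ∈ [0,1]}`. -/
def stride (g : ℝ → ℝ) : ℝ :=
  sSup {α : ℝ | 0 ≤ α ∧ ∀ x ∈ Icc (0:ℝ) 1, α - x ≤ α * g x}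

/-- The class 𝒦. -/
def MemK (g : ℝ → ℝ) : Prop :=
  MemCconv g ∧ 1/5 ≤ stride g ∧ 1/5 ≤ ∫ x in (0:ℝ)..1, g x

/-- `[c,d] ⊆ [0,ℓ]` is a sign switch of `Δ`. -/
def SignSwitch (Δ : ℝ → ℝ) (ℓ c d : ℝ) : Prop :=
  0 < c ∧ c ≤ d ∧ d < ℓ ∧ (∀ x ∈ Icc c d, Δ x = 0) ∧
  ∃ δ : ℝ, 0 < δ ∧ δ ≤ min c (ℓ - d) ∧
    ∀ x : ℝ, 0 < x → x ≤ δ → Δ (c - x) * Δ (d + x) < 0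

/-- `χΔ`: the number of sign switches of `Δ` on `[0,ℓ]`, in `ℕ∞`. -/
def nSwitch (Δ : ℝ → ℝ) (ℓ : ℝ) : ℕ∞ :=
  {p : ℝ × ℝ | SignSwitch Δ ℓ p.1 p.2}.encard

/-- The crossing number `χ(f,g) = sup {χ(f(a·) - b g) : a, b > 0}`. -/
def crossNum (f g : ℝ → ℝ) : ℕ∞ :=
  ⨆ a ∈ Set.Ioi (0:ℝ), ⨆ b ∈ Set.Ioi (0:ℝ),
    nSwitch (fun x => f (a * x) - b * g x) (min 1 (1/a))

/-- `Dominates f g` means `f` dominates `g`, written `g ◁ f`. -/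
def Dominates (f g : ℝ → ℝ) : Prop :=
  crossNum f g = 2 ∧ ∀ x ∈ Icc (0:ℝ) 1, g x ≤ f x

section Aux
open Topology

variable {g : ℝ → ℝ}

lemma pInv_mem (hg : MemC g) {y : ℝ} (hy : y ≤ 1) :
    pseudoInv g y ∈ {x | x ∈ Icc (0:ℝ) 1 ∧ y ≤ g x} := by
  have h0 : (0:ℝ) ∈ {x | x ∈ Icc (0:ℝ) 1 ∧ y ≤ g x} :=
    ⟨⟨le_refl 0, zero_le_one⟩, by rw [hg.1.2.2.1]; exact hy⟩
  have hEq : {x | x ∈ Icc (0:ℝ) 1 ∧ y ≤ g x} = Icc 0 1 ∩ g ⁻¹' (Ici y) := rfl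
  have hclosed : IsClosed {x | x ∈ Icc (0:ℝ) 1 ∧ y ≤ g x} := by
    rw [hEq]
    exact hg.2.1.preimage_isClosed_of_isClosed isClosed_Icc isClosed_Ici
  exact hclosed.csSup_mem ⟨0, h0⟩ ⟨1, fun z hz => hz.1.2⟩

lemma le_pInv (hg : MemC g) {x y : ℝ} (hx : x ∈ Icc (0:ℝ) 1) (hxy : y ≤ g x) :
    x ≤ pseudoInv g y :=
  le_csSup ⟨1, fun z hz => hz.1.2⟩ ⟨hx, hxy⟩

lemma pInv_nonneg (hg : MemC g) {y : ℝ} (hy : y ≤ 1) : 0 ≤ pseudoInv g y :=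
  (pInv_mem hg hy).1.1

lemma pInv_le_one (hg : MemC g) {y : ℝ} (hy : y ≤ 1) : pseudoInv g y ≤ 1 :=
  (pInv_mem hg hy).1.2

lemma pInv_anti (hg : MemC g) : AntitoneOn (pseudoInv g) (Icc 0 1) := by
  intro y hy y' hy' hle
  exact csSup_le_csSup ⟨1, fun z hz => hz.1.2⟩
    ⟨0, ⟨⟨le_refl 0, zero_le_one⟩, by rw [hg.1.2.2.1]; exact hy'.2⟩⟩
    (fun x hx => ⟨hx.1, hle.trans hx.2⟩)

lemma exists_gt_right (hg : MemC g) {c v : ℝ} (hc0 : 0 ≤ c) (hc1 : c < 1) (hv : v < g c) :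
    ∃ z, z ∈ Ioc c 1 ∧ v < g z := by
  have hcw : ContinuousWithinAt g (Icc 0 1) c := hg.2.1 c ⟨hc0, hc1.le⟩
  have hsub : Ioc c 1 ⊆ Icc 0 1 := fun z hz => ⟨hc0.trans hz.1.le, hz.2⟩
  have hcw' : ContinuousWithinAt g (Ioc c 1) c := hcw.mono hsub
  have hne : (𝓝[Ioc c 1] c).NeBot := by
    rw [nhdsWithin_Ioc_eq_nhdsGT hc1]
    infer_instance
  have hev : ∀ᶠ z in 𝓝[Ioc c 1] c, v < g z := hcw' (Ioi_mem_nhds hv)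
  obtain ⟨z, h1, h2⟩ := (hev.and self_mem_nhdsWithin).exists
  exact ⟨z, h2, h1⟩

lemma pInv_pos (hg : MemC g) {y : ℝ} (hy : y < 1) : 0 < pseudoInv g y := by
  obtain ⟨z, hz, hvz⟩ := exists_gt_right hg le_rfl one_pos (by rw [hg.1.2.2.1]; exact hy)
  exact lt_of_lt_of_le hz.1 (le_pInv hg ⟨hz.1.le, hz.2⟩ hvz.le)

lemma pInv_intble (hg : MemC g) {a b : ℝ} (ha : a ∈ Icc (0:ℝ) 1) (hb : b ∈ Icc (0:ℝ) 1) :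
    IntervalIntegrable (pseudoInv g) volume a b :=
  ((pInv_anti hg).mono (uIcc_subset_Icc ha hb)).intervalIntegrable

lemma pInv_integral_ge (hg : MemC g) {a b : ℝ} (ha : 0 ≤ a) (hab : a ≤ b) (hb : b ≤ 1) :
    (b - a) * pseudoInv g b ≤ ∫ y in a..b, pseudoInv g y := by
  have := intervalIntegral.integral_mono_on (f := fun _ => pseudoInv g b)
    (g := pseudoInv g) (μ := volume) hab intervalIntegrable_const
    (pInv_intble hg ⟨ha, hab.trans hb⟩ ⟨ha.trans hab, hb⟩)
    (fun y hy => pInv_anti hg ⟨ha.trans hy.1, hy.2.trans hb⟩ ⟨ha.trans hab, hb⟩ hy.2)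
  rwa [intervalIntegral.integral_const, smul_eq_mul] at this

lemma pInv_integral_le (hg : MemC g) {a b : ℝ} (ha : 0 ≤ a) (hab : a ≤ b) (hb : b ≤ 1) :
    (∫ y in a..b, pseudoInv g y) ≤ (b - a) * pseudoInv g a := by
  have := intervalIntegral.integral_mono_on (f := pseudoInv g)
    (g := fun _ => pseudoInv g a) (μ := volume) hab
    (pInv_intble hg ⟨ha, hab.trans hb⟩ ⟨ha.trans hab, hb⟩) intervalIntegrable_const
    (fun y hy => pInv_anti hg ⟨ha, hab.trans hb⟩ ⟨ha.trans hy.1, hy.2.trans hb⟩ hy.1)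
  rwa [intervalIntegral.integral_const, smul_eq_mul] at this

lemma pInv_integral_eq (hg : MemC g) :
    ∫ y in (0:ℝ)..1, pseudoInv g y = ∫ t in (0:ℝ)..1, g t := by
  have hgint : IntegrableOn g (Icc (0:ℝ) 1) := hg.2.1.integrableOn_compact isCompact_Icc
  have hnn : 0 ≤ᵐ[volume.restrict (Icc (0:ℝ) 1)] g :=
    (ae_restrict_iff' measurableSet_Icc).2 (ae_of_all _ fun x hx => (hg.1.1 x hx).1)
  have hbd : g ≤ᵐ[volume.restrict (Icc (0:ℝ) 1)] fun _ => (1:ℝ) :=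
    (ae_restrict_iff' measurableSet_Icc).2 (ae_of_all _ fun x hx => (hg.1.1 x hx).2)
  have key := hgint.integral_eq_integral_Ioc_meas_le hnn hbd
  have h1 : ∫ ω, g ω ∂(volume.restrict (Icc (0:ℝ) 1)) = ∫ t in (0:ℝ)..1, g t := by
    rw [intervalIntegral.integral_of_le zero_le_one, ← integral_Icc_eq_integral_Ioc]
  have h2 : ∀ t ∈ Ioc (0:ℝ) 1,
      pseudoInv g t = ENNReal.toReal (volume.restrict (Icc (0:ℝ) 1) {a | t ≤ g a}) := by
    intro t ht
    rw [Measure.restrict_apply' measurableSet_Icc]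
    have hset : {a | t ≤ g a} ∩ Icc (0:ℝ) 1 = Icc 0 (pseudoInv g t) := by
      ext z
      constructor
      · rintro ⟨hz1, hz2⟩
        exact ⟨hz2.1, le_pInv hg hz2 hz1⟩
      · rintro ⟨hz0, hz1⟩
        have hm := pInv_mem hg ht.2
        have hz1' : z ≤ 1 := hz1.trans hm.1.2
        exact ⟨hm.2.trans (hg.1.2.1 ⟨hz0, hz1'⟩ hm.1 hz1), ⟨hz0, hz1'⟩⟩
    rw [hset, Real.volume_Icc, ENNReal.toReal_ofReal (by linarith [(pInv_mem hg ht.2).1.1])]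
    ring
  rw [← h1, key, intervalIntegral.integral_of_le zero_le_one]
  exact setIntegral_congr_fun measurableSet_Ioc (fun t ht => h2 t ht)

end Aux

/-- for `g ∈ 𝒞`, `Tg` is strictly decreasing, convex, with values `1` at `0`
and `0` at `1`, satisfies `(Tg)(x) < 1 - x` on `(0,1)`, and
`1 - x/∫₀¹g ≤ (Tg)(x) ≤ 1 - x` on `[0,1]`. -/
theorem stmt5 (g : ℝ → ℝ) (hg : MemC g) :
    StrictAntiOn (Tmap g) (Icc 0 1) ∧ ConvexOn ℝ (Icc 0 1) (Tmap g) ∧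
    Tmap g 0 = 1 ∧ Tmap g 1 = 0 ∧
    (∀ x ∈ Ioo (0:ℝ) 1, Tmap g x < 1 - x) ∧
    (∀ x ∈ Icc (0:ℝ) 1, 1 - x / (∫ t in (0:ℝ)..1, g t) ≤ Tmap g x ∧ Tmap g x ≤ 1 - x) := by
  set c := ∫ t in (0:ℝ)..1, g t with hc
  have hcpos : 0 < c := hg.1.2.2.2
  have hLC : (∫ y in (0:ℝ)..1, pseudoInv g y) = c := (pInv_integral_eq hg).trans hc.symm
  have hInt : ∀ a ∈ Icc (0:ℝ) 1, ∀ b ∈ Icc (0:ℝ) 1,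
      IntervalIntegrable (pseudoInv g) volume a b := fun a ha b hb => pInv_intble hg ha hb
  have h01 : (0:ℝ) ∈ Icc (0:ℝ) 1 := ⟨le_rfl, zero_le_one⟩
  have h11 : (1:ℝ) ∈ Icc (0:ℝ) 1 := ⟨zero_le_one, le_rfl⟩
  have hAdd : ∀ x ∈ Icc (0:ℝ) 1,
      (∫ y in (0:ℝ)..x, pseudoInv g y) + ∫ y in x..1, pseudoInv g y = c := fun x hx => by
    rw [intervalIntegral.integral_add_adjacent_intervals (hInt 0 h01 x hx) (hInt x hx 1 h11), hLC]
  have hTmap : ∀ x : ℝ, Tmap g x = (∫ y in x..1, pseudoInv g y) / c := fun x => rfl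
  -- strict inequality x*B < (1-x)*A for x ∈ Ioo 0 1
  have hStrict : ∀ x ∈ Ioo (0:ℝ) 1,
      x * (∫ y in x..1, pseudoInv g y) < (1 - x) * ∫ y in (0:ℝ)..x, pseudoInv g y := by
    intro x hx
    have hxI : x ∈ Icc (0:ℝ) 1 := ⟨hx.1.le, hx.2.le⟩
    have hlI : x/2 ∈ Icc (0:ℝ) 1 := ⟨by linarith [hx.1], by linarith [hx.2]⟩
    have hmI : (x+1)/2 ∈ Icc (0:ℝ) 1 := ⟨by linarith [hx.1], by linarith [hx.2]⟩
    have hpl : pseudoInv g x ≤ pseudoInv g (x/2) :=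
      pInv_anti hg hlI hxI (by linarith [hx.1])
    have hpm : pseudoInv g ((x+1)/2) ≤ pseudoInv g x :=
      pInv_anti hg hxI hmI (by linarith [hx.2])
    have hpx0 : 0 ≤ pseudoInv g x := pInv_nonneg hg hxI.2
    have hAsplit : (∫ y in (0:ℝ)..x, pseudoInv g y)
        = (∫ y in (0:ℝ)..x/2, pseudoInv g y) + ∫ y in (x/2)..x, pseudoInv g y :=
      (intervalIntegral.integral_add_adjacent_intervals (hInt 0 h01 (x/2) hlI)
        (hInt (x/2) hlI x hxI)).symm
    have hBsplit : (∫ y in x..1, pseudoInv g y)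
        = (∫ y in x..(x+1)/2, pseudoInv g y) + ∫ y in ((x+1)/2)..1, pseudoInv g y :=
      (intervalIntegral.integral_add_adjacent_intervals (hInt x hxI ((x+1)/2) hmI)
        (hInt ((x+1)/2) hmI 1 h11)).symm
    have hA1 : (x/2 - 0) * pseudoInv g (x/2) ≤ ∫ y in (0:ℝ)..x/2, pseudoInv g y :=
      pInv_integral_ge hg le_rfl hlI.1 hlI.2
    have hA2 : (x - x/2) * pseudoInv g x ≤ ∫ y in (x/2)..x, pseudoInv g y :=
      pInv_integral_ge hg hlI.1 (by linarith [hx.1]) hxI.2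
    have hAge : x * pseudoInv g x ≤ ∫ y in (0:ℝ)..x, pseudoInv g y :=
      by have := pInv_integral_ge hg le_rfl hxI.1 hxI.2; linarith
    have hBle : (∫ y in x..1, pseudoInv g y) ≤ (1 - x) * pseudoInv g x :=
      pInv_integral_le hg hxI.1 hxI.2 le_rfl
    rcases lt_or_eq_of_le hpl with hlt | heq
    · -- pInv x < pInv (x/2)
      have hAbig : x/2 * (pseudoInv g (x/2) + pseudoInv g x)
          ≤ ∫ y in (0:ℝ)..x, pseudoInv g y := by rw [hAsplit]; nlinarith
      have h1 : x * (∫ y in x..1, pseudoInv g y) ≤ x * ((1 - x) * pseudoInv g x) :=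
        mul_le_mul_of_nonneg_left hBle hx.1.le
      have h2 : (1 - x) * (x/2 * (pseudoInv g (x/2) + pseudoInv g x))
          ≤ (1 - x) * ∫ y in (0:ℝ)..x, pseudoInv g y :=
        mul_le_mul_of_nonneg_left hAbig (by linarith [hx.2])
      nlinarith [mul_pos (mul_pos hx.1 (show (0:ℝ) < 1 - x by linarith [hx.2]))
        (sub_pos.2 hlt)]
    · rcases lt_or_eq_of_le hpm with hlt2 | heq2
      · -- pInv ((x+1)/2) < pInv x
        have hB1 : (∫ y in x..(x+1)/2, pseudoInv g y) ≤ ((x+1)/2 - x) * pseudoInv g x :=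
          pInv_integral_le hg hxI.1 (by linarith [hx.2]) hmI.2
        have hB2 : (∫ y in ((x+1)/2)..1, pseudoInv g y) ≤ (1 - (x+1)/2) * pseudoInv g ((x+1)/2) :=
          pInv_integral_le hg hmI.1 hmI.2 le_rfl
        have hBsmall : (∫ y in x..1, pseudoInv g y) < (1 - x) * pseudoInv g x := by
          rw [hBsplit]; nlinarith [hx.2]
        have h1 : x * (∫ y in x..1, pseudoInv g y) < x * ((1 - x) * pseudoInv g x) :=
          (mul_lt_mul_iff_right₀ hx.1).2 hBsmall
        have h2 : (1 - x) * (x * pseudoInv g x)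
            ≤ (1 - x) * ∫ y in (0:ℝ)..x, pseudoInv g y :=
          mul_le_mul_of_nonneg_left hAge (by linarith [hx.2])
        nlinarith
      · -- pInv constant on [x/2,(x+1)/2] : contradiction
        exfalso
        have hgc : (x+1)/2 ≤ g (pseudoInv g x) := by
          have hm := (pInv_mem hg hmI.2).2
          rwa [heq2] at hm
        have hc1 : pseudoInv g x < 1 := by
          rcases lt_or_eq_of_le (pInv_le_one hg hxI.2) with h | h
          · exact h
          · exfalso; rw [h, hg.2.2] at hgc; linarith [hx.1]
        obtain ⟨z, hz, hgz⟩ := exists_gt_right hg hpx0 hc1 (by linarith [hx.1] : x/2 < g (pseudoInv g x))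
        have hyI : min (g z) ((x+1)/2) ∈ Icc (0:ℝ) 1 :=
          ⟨le_min (by linarith [hx.1]) (by linarith [hx.1]), (min_le_right _ _).trans hmI.2⟩
        have hy1 : pseudoInv g (min (g z) ((x+1)/2)) ≤ pseudoInv g (x/2) :=
          pInv_anti hg hlI hyI (le_min (by linarith [hx.1]) (by linarith [hx.1]))
        have hy2 : pseudoInv g ((x+1)/2) ≤ pseudoInv g (min (g z) ((x+1)/2)) :=
          pInv_anti hg hyI hmI (min_le_right _ _)
        have hzle : z ≤ pseudoInv g (min (g z) ((x+1)/2)) :=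
          le_pInv hg ⟨hpx0.trans hz.1.le, hz.2⟩ (min_le_left _ _)
        rw [← heq] at hy1
        rw [heq2] at hy2
        linarith [hz.1]
  -- weak inequality x*B ≤ (1-x)*A for x ∈ Icc 0 1
  have hWeak : ∀ x ∈ Icc (0:ℝ) 1,
      x * (∫ y in x..1, pseudoInv g y) ≤ (1 - x) * ∫ y in (0:ℝ)..x, pseudoInv g y := by
    intro x hx
    have hAge : x * pseudoInv g x ≤ ∫ y in (0:ℝ)..x, pseudoInv g y :=
      by have := pInv_integral_ge hg le_rfl hx.1 hx.2; linarith
    have hBle : (∫ y in x..1, pseudoInv g y) ≤ (1 - x) * pseudoInv g x :=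
      pInv_integral_le hg hx.1 hx.2 le_rfl
    have h1 : x * (∫ y in x..1, pseudoInv g y) ≤ x * ((1 - x) * pseudoInv g x) :=
      mul_le_mul_of_nonneg_left hBle hx.1
    have h2 : (1 - x) * (x * pseudoInv g x) ≤ (1 - x) * ∫ y in (0:ℝ)..x, pseudoInv g y :=
      mul_le_mul_of_nonneg_left hAge (by linarith [hx.2])
    nlinarith
  refine ⟨?_, ?_, ?_, ?_, ?_, ?_⟩
  · -- StrictAntiOn
    intro a ha b hb hab
    have hmI : (a+b)/2 ∈ Icc (0:ℝ) 1 := ⟨by linarith [ha.1, hab], by linarith [hb.2, hab]⟩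
    have hm1 : (a+b)/2 < 1 := by linarith [hb.2]
    have hsplit : (∫ y in a..1, pseudoInv g y)
        = (∫ y in a..b, pseudoInv g y) + ∫ y in b..1, pseudoInv g y :=
      (intervalIntegral.integral_add_adjacent_intervals (hInt a ha b hb) (hInt b hb 1 h11)).symm
    have hsplit2 : (∫ y in a..b, pseudoInv g y)
        = (∫ y in a..(a+b)/2, pseudoInv g y) + ∫ y in ((a+b)/2)..b, pseudoInv g y :=
      (intervalIntegral.integral_add_adjacent_intervals (hInt a ha ((a+b)/2) hmI)
        (hInt ((a+b)/2) hmI b hb)).symm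
    have h1 : ((a+b)/2 - a) * pseudoInv g ((a+b)/2) ≤ ∫ y in a..(a+b)/2, pseudoInv g y :=
      pInv_integral_ge hg ha.1 (by linarith) hmI.2
    have h2 : ((b - (a+b)/2)) * pseudoInv g b ≤ ∫ y in ((a+b)/2)..b, pseudoInv g y :=
      pInv_integral_ge hg hmI.1 (by linarith) hb.2
    have hp : 0 < pseudoInv g ((a+b)/2) := pInv_pos hg hm1
    have hpb : 0 ≤ pseudoInv g b := pInv_nonneg hg hb.2
    have hnum : (∫ y in b..1, pseudoInv g y) < ∫ y in a..1, pseudoInv g y := by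
      rw [hsplit, hsplit2]; nlinarith
    rw [hTmap a, hTmap b, div_lt_div_iff₀ hcpos hcpos]
    exact mul_lt_mul_of_pos_right hnum hcpos
  · -- ConvexOn
    have hKey : ∀ x ∈ Icc (0:ℝ) 1, ∀ y ∈ Icc (0:ℝ) 1, x ≤ y → ∀ a b : ℝ,
        0 ≤ a → 0 ≤ b → a + b = 1 →
        Tmap g (a * x + b * y) ≤ a * Tmap g x + b * Tmap g y := by
      intro x hx y hy hxy a b ha hb hab
      have hxs : a * x + b * x = x := by rw [← add_mul, hab, one_mul]
      have hys : a * y + b * y = y := by rw [← add_mul, hab, one_mul]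
      have hxm : x ≤ a * x + b * y := by linarith [mul_le_mul_of_nonneg_left hxy hb]
      have hmy : a * x + b * y ≤ y := by linarith [mul_le_mul_of_nonneg_left hxy ha]
      have hmI : a * x + b * y ∈ Icc (0:ℝ) 1 := ⟨hx.1.trans hxm, hmy.trans hy.2⟩
      have hFx : (∫ t in x..1, pseudoInv g t)
          = (∫ t in x..(a*x+b*y), pseudoInv g t) + ∫ t in (a*x+b*y)..1, pseudoInv g t :=
        (intervalIntegral.integral_add_adjacent_intervals (hInt x hx _ hmI)
          (hInt _ hmI 1 h11)).symm
      have hFy : (∫ t in (a*x+b*y)..1, pseudoInv g t)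
          = (∫ t in (a*x+b*y)..y, pseudoInv g t) + ∫ t in y..1, pseudoInv g t :=
        (intervalIntegral.integral_add_adjacent_intervals (hInt _ hmI y hy)
          (hInt y hy 1 h11)).symm
      have h1 : ((a*x+b*y) - x) * pseudoInv g (a*x+b*y)
          ≤ ∫ t in x..(a*x+b*y), pseudoInv g t :=
        pInv_integral_ge hg hx.1 hxm hmI.2
      have h2 : (∫ t in (a*x+b*y)..y, pseudoInv g t)
          ≤ (y - (a*x+b*y)) * pseudoInv g (a*x+b*y) :=
        pInv_integral_le hg hmI.1 hmy hy.2
      have hpm : 0 ≤ pseudoInv g (a*x+b*y) := pInv_nonneg hg hmI.2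
      have e1 : b * (∫ t in (a*x+b*y)..y, pseudoInv g t)
          ≤ b * ((y - (a*x+b*y)) * pseudoInv g (a*x+b*y)) := mul_le_mul_of_nonneg_left h2 hb
      have e2 : a * (((a*x+b*y) - x) * pseudoInv g (a*x+b*y))
          ≤ a * ∫ t in x..(a*x+b*y), pseudoInv g t := mul_le_mul_of_nonneg_left h1 ha
      have hmx : (a*x+b*y) - x = b * (y - x) := by
        have : a = 1 - b := by linarith
        rw [this]; ring
      have hym : y - (a*x+b*y) = a * (y - x) := by
        have : b = 1 - a := by linarith
        rw [this]; ring
      have hchain : b * (∫ t in (a*x+b*y)..y, pseudoInv g t)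
          ≤ a * ∫ t in x..(a*x+b*y), pseudoInv g t := by
        rw [hmx] at e2; rw [hym] at e1; nlinarith
      have goal' : (∫ t in (a*x+b*y)..1, pseudoInv g t)
          ≤ a * (∫ t in x..1, pseudoInv g t) + b * ∫ t in y..1, pseudoInv g t := by
        rw [hFx]
        have hFy' : (∫ t in y..1, pseudoInv g t)
            = (∫ t in (a*x+b*y)..1, pseudoInv g t) - ∫ t in (a*x+b*y)..y, pseudoInv g t := by
          rw [hFy]; ring
        rw [hFy']
        have hMs : a * (∫ t in (a*x+b*y)..1, pseudoInv g t)
            + b * (∫ t in (a*x+b*y)..1, pseudoInv g t)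
            = ∫ t in (a*x+b*y)..1, pseudoInv g t := by rw [← add_mul, hab, one_mul]
        linarith [hchain]
      rw [hTmap, hTmap, hTmap, div_le_iff₀ hcpos]
      have : a * ((∫ t in x..1, pseudoInv g t) / c) + b * ((∫ t in y..1, pseudoInv g t) / c)
          = (a * (∫ t in x..1, pseudoInv g t) + b * ∫ t in y..1, pseudoInv g t) / c := by
        field_simp
      rw [this, div_mul_cancel₀ _ hcpos.ne']
      exact goal'
    refine ⟨convex_Icc 0 1, ?_⟩
    intro x hx y hy a b ha hb hab
    rcases le_total x y with hxy | hyx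
    · simpa [smul_eq_mul] using hKey x hx y hy hxy a b ha hb hab
    · have h := hKey y hy x hx hyx b a hb ha (by linarith)
      calc Tmap g (a • x + b • y) = Tmap g (b * y + a * x) := by
            rw [smul_eq_mul, smul_eq_mul, add_comm]
        _ ≤ b * Tmap g y + a * Tmap g x := h
        _ = a • Tmap g x + b • Tmap g y := by rw [smul_eq_mul, smul_eq_mul, add_comm]
  · rw [hTmap, hLC]; exact div_self hcpos.ne'
  · rw [hTmap, intervalIntegral.integral_same, zero_div]
  · -- strict bound on Ioo
    intro x hx
    have hxI : x ∈ Icc (0:ℝ) 1 := ⟨hx.1.le, hx.2.le⟩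
    have hAB := hAdd x hxI
    have h := hStrict x hx
    rw [hTmap, div_lt_iff₀ hcpos, ← hAB]
    nlinarith
  · -- two-sided bound on Icc
    intro x hx
    have hAB := hAdd x hx
    constructor
    · have hA1 : (∫ y in (0:ℝ)..x, pseudoInv g y) ≤ ∫ y in (0:ℝ)..x, (1:ℝ) :=
        intervalIntegral.integral_mono_on hx.1 (hInt 0 h01 x hx) intervalIntegrable_const
          (fun y hy => pInv_le_one hg (hy.2.trans hx.2))
      rw [intervalIntegral.integral_const, smul_eq_mul, mul_one, sub_zero] at hA1
      have h3 : 1 - x / c = (c - x)/c := by field_simp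
      have h2 : (c - x)/c ≤ (∫ y in x..1, pseudoInv g y)/c := by
        gcongr
        linarith
      rw [hTmap, h3]
      exact h2
    · have h := hWeak x hx
      rw [hTmap, div_le_iff₀ hcpos, ← hAB]
      nlinarith
end
end

section
/- For every g ∈ 𝒞 and all t ∈ [0,1], one has (Tg)(g(t)) · ∫₀¹ g = ∫₀ᵗ g(x) dx − t·g(t). -/
open Set MeasureTheory Filter intervalIntegral

noncomputable section

/-!
For `s = g t`, the superlevel sets `{x ∈ (0,t] | y ≤ g x}` with `s < y ≤ g 0` are the intervals
`(0, g* y]`. The layer-cake formula applied to `g - s` on `[0,t]` therefore turns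
`∫₀ᵗ (g - s) = ∫₀ᵗ g - t·s` into `∫ₛ^{g 0} g*`, which is `(Tg)(s) · ∫₀¹ g` when `g 0 = 1`.
-/

section PseudoInverse

variable {g : ℝ → ℝ} {t y : ℝ}

lemma isClosed_setOf_mem_Icc_le (hcont : ContinuousOn g (Icc 0 1)) (y : ℝ) :
    IsClosed {x | x ∈ Icc (0:ℝ) 1 ∧ y ≤ g x} :=
  hcont.preimage_isClosed_of_isClosed isClosed_Icc isClosed_Ici

lemma pseudoInv_nonneg (hy : y ≤ g 0) : 0 ≤ pseudoInv g y :=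
  le_csSup (bddAbove_Icc.mono fun _ hx => hx.1) ⟨⟨le_rfl, zero_le_one⟩, hy⟩

lemma setOf_mem_Icc_le_eq_Icc_pseudoInv (hcont : ContinuousOn g (Icc 0 1))
    (hanti : AntitoneOn g (Icc 0 1)) (hy : y ≤ g 0) :
    {x | x ∈ Icc (0:ℝ) 1 ∧ y ≤ g x} = Icc 0 (pseudoInv g y) := by
  set S := {x | x ∈ Icc (0:ℝ) 1 ∧ y ≤ g x}
  have hbdd : BddAbove S := bddAbove_Icc.mono fun x hx => hx.1
  have hmem : pseudoInv g y ∈ S :=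
    (isClosed_setOf_mem_Icc_le hcont y).csSup_mem ⟨0, ⟨le_rfl, zero_le_one⟩, hy⟩ hbdd
  ext x
  refine ⟨fun hx => ⟨hx.1.1, le_csSup hbdd hx⟩, fun hx => ?_⟩
  have hx1 : x ∈ Icc (0:ℝ) 1 := ⟨hx.1, hx.2.trans hmem.1.2⟩
  exact ⟨hx1, hmem.2.trans (hanti hx1 hmem.1 hx.2)⟩

lemma pseudoInv_le_of_apply_lt (hcont : ContinuousOn g (Icc 0 1))
    (hanti : AntitoneOn g (Icc 0 1)) (ht : t ∈ Icc (0:ℝ) 1) (hlt : g t < y) (hy : y ≤ g 0) :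
    pseudoInv g y ≤ t := by
  have hp : pseudoInv g y ∈ Icc 0 (pseudoInv g y) := right_mem_Icc.2 (pseudoInv_nonneg hy)
  rw [← setOf_mem_Icc_le_eq_Icc_pseudoInv hcont hanti hy] at hp
  by_contra! htp
  linarith [hp.2, hanti ht hp.1 htp.le]

lemma Ioc_inter_setOf_le_eq_Ioc_pseudoInv (hcont : ContinuousOn g (Icc 0 1))
    (hanti : AntitoneOn g (Icc 0 1)) (ht : t ∈ Icc (0:ℝ) 1) (hlt : g t < y) (hy : y ≤ g 0) :
    Ioc 0 t ∩ {x | y ≤ g x} = Ioc 0 (pseudoInv g y) := by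
  have hpt := pseudoInv_le_of_apply_lt hcont hanti ht hlt hy
  ext x
  have hx := congrArg (x ∈ ·) (setOf_mem_Icc_le_eq_Icc_pseudoInv hcont hanti hy)
  simp only [mem_inter_iff, mem_Ioc, mem_Icc, mem_ofPred_eq, eq_iff_iff] at hx ht ⊢
  grind

theorem integral_pseudoInv_eq (hcont : ContinuousOn g (Icc 0 1))
    (hanti : AntitoneOn g (Icc 0 1)) (ht : t ∈ Icc (0:ℝ) 1) :
    ∫ y in g t..g 0, pseudoInv g y = (∫ x in (0:ℝ)..t, g x) - t * g t := by
  set μ := volume.restrict (Ioc (0:ℝ) t)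
  have hsub : Ioc 0 t ⊆ Icc (0:ℝ) 1 := Ioc_subset_Icc_self.trans (Icc_subset_Icc_right ht.2)
  have hint : IntervalIntegrable g volume 0 t :=
    (hcont.mono (Icc_subset_Icc_right ht.2)).intervalIntegrable_of_Icc ht.1
  have hg0t : g t ≤ g 0 := hanti ⟨le_rfl, zero_le_one⟩ ht ht.1
  have f_nn : 0 ≤ᵐ[μ] fun x => g x - g t :=
    ae_restrict_of_forall_mem measurableSet_Ioc fun x hx =>
      sub_nonneg.2 (hanti (hsub hx) ht hx.2)
  have f_bdd : (fun x => g x - g t) ≤ᵐ[μ] fun _ => g 0 - g t :=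
    ae_restrict_of_forall_mem measurableSet_Ioc fun x hx =>
      sub_le_sub_right (hanti ⟨le_rfl, zero_le_one⟩ (hsub hx) hx.1.le) _
  have hlevel : ∀ u ∈ Ioc (0:ℝ) (g 0 - g t),
      μ.real {x | u ≤ g x - g t} = pseudoInv g (g t + u) := by
    rintro u ⟨hu0, hu⟩
    simp only [le_sub_iff_add_le']
    rw [measureReal_restrict_apply' measurableSet_Ioc, inter_comm,
      Ioc_inter_setOf_le_eq_Ioc_pseudoInv hcont hanti ht (by linarith) (by linarith),
      Real.volume_real_Ioc_of_le (pseudoInv_nonneg (by linarith)), sub_zero]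
  calc ∫ y in g t..g 0, pseudoInv g y
      = ∫ u in (0:ℝ)..g 0 - g t, pseudoInv g (g t + u) := by
        rw [integral_comp_add_left (pseudoInv g), add_zero, add_sub_cancel]
    _ = ∫ u in Ioc 0 (g 0 - g t), μ.real {x | u ≤ g x - g t} := by
        rw [integral_of_le (sub_nonneg.2 hg0t), setIntegral_congr_fun measurableSet_Ioc hlevel]
    _ = ∫ x in (0:ℝ)..t, (g x - g t) := by
        rw [integral_of_le ht.1]
        exact ((hint.sub intervalIntegrable_const).1.integral_eq_integral_Ioc_meas_le
          f_nn f_bdd).symm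
    _ = (∫ x in (0:ℝ)..t, g x) - t * g t := by
        rw [integral_sub hint intervalIntegrable_const, intervalIntegral.integral_const,
          smul_eq_mul, sub_zero]

end PseudoInverse

/-- for `g ∈ 𝒞` and `t ∈ [0,1]`,
`(Tg)(g t) · ∫₀¹ g = ∫₀ᵗ g - t·g t`. -/
theorem stmt6 (g : ℝ → ℝ) (hg : MemC g) :
    ∀ t ∈ Icc (0:ℝ) 1,
      Tmap g (g t) * (∫ x in (0:ℝ)..1, g x) = (∫ x in (0:ℝ)..t, g x) - t * g t := by
  obtain ⟨⟨-, hanti, hg0, hpos⟩, hcont, -⟩ := hg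
  intro t ht
  have key := integral_pseudoInv_eq hcont hanti ht
  rw [hg0] at key
  rw [Tmap, div_mul_cancel₀ _ hpos.ne', key]
end
end

section
/- Let g ∈ 𝒞̆, let 0 < α ≤ σ(g), let β = inf{x ∈ [0,1] : g(x) = 0}, and let γ = ∫₀¹ g. Then αβ − 4αγ + 4γ² ≤ 6(β − α)·γ·∫₀¹ Tg. -/
open Set MeasureTheory Filter intervalIntegral

noncomputable section

section St8

variable {g : ℝ → ℝ} {α β : ℝ}

lemma st8_stride_le (hg : MemCconv g) (hα : 0 < α) (hασ : α ≤ stride g) :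
    ∀ x ∈ Icc (0:ℝ) 1, α - x ≤ α * g x := by
  intro x hx
  have hgx1 : g x ≤ 1 := (hg.1.1.1 x hx).2
  rcases eq_or_lt_of_le hgx1 with h1 | h1
  · rw [h1]; nlinarith [hx.1]
  · have hS : ∀ a ∈ {a : ℝ | 0 ≤ a ∧ ∀ x ∈ Icc (0:ℝ) 1, a - x ≤ a * g x},
        a ≤ x / (1 - g x) := by
      intro a ha
      have h2 := ha.2 x hx
      rw [le_div_iff₀ (by linarith)]
      nlinarith
    have hσ : stride g ≤ x / (1 - g x) :=
      csSup_le ⟨0, ⟨le_rfl, fun x hx => by nlinarith [hx.1]⟩⟩ hS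
    have hax : α ≤ x / (1 - g x) := le_trans hασ hσ
    rw [le_div_iff₀ (by linarith)] at hax
    nlinarith

lemma st8_alpha_le_one (hg : MemCconv g) (hα : 0 < α) (hασ : α ≤ stride g) : α ≤ 1 := by
  have := st8_stride_le hg hα hασ 1 (by norm_num)
  rw [hg.1.2.2] at this; linarith

lemma st8_beta_mem (hg : MemCconv g)
    (hβ : β = sInf {x | x ∈ Icc (0:ℝ) 1 ∧ g x = 0}) :
    β ∈ Icc (0:ℝ) 1 ∧ g β = 0 := by
  have hset : {x | x ∈ Icc (0:ℝ) 1 ∧ g x = 0} = Icc (0:ℝ) 1 ∩ g ⁻¹' {0} := by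
    ext x; simp [Set.mem_inter_iff, Set.mem_preimage]
  have hcl : IsClosed {x | x ∈ Icc (0:ℝ) 1 ∧ g x = 0} := by
    rw [hset]
    exact hg.1.2.1.preimage_isClosed_of_isClosed isClosed_Icc isClosed_singleton
  have hne : {x | x ∈ Icc (0:ℝ) 1 ∧ g x = 0}.Nonempty :=
    ⟨1, by simp [hg.1.2.2]⟩
  have hbdd : BddBelow {x | x ∈ Icc (0:ℝ) 1 ∧ g x = 0} :=
    ⟨0, fun x hx => hx.1.1⟩
  have := hcl.csInf_mem hne hbdd
  rw [← hβ] at this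
  exact ⟨this.1, this.2⟩

lemma st8_gzero (hg : MemCconv g)
    (hβ : β = sInf {x | x ∈ Icc (0:ℝ) 1 ∧ g x = 0}) :
    ∀ x ∈ Icc (0:ℝ) 1, β ≤ x → g x = 0 := by
  intro x hx hβx
  obtain ⟨hβmem, hgβ⟩ := st8_beta_mem hg hβ
  have h1 : g x ≤ g β := hg.1.1.2.1 hβmem hx hβx
  have h2 : 0 ≤ g x := (hg.1.1.1 x hx).1
  rw [hgβ] at h1; linarith

lemma st8_gpos (hg : MemCconv g)
    (hβ : β = sInf {x | x ∈ Icc (0:ℝ) 1 ∧ g x = 0}) :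
    ∀ x ∈ Icc (0:ℝ) 1, x < β → 0 < g x := by
  intro x hx hxβ
  rcases (hg.1.1.1 x hx).1.lt_or_eq with h | h
  · exact h
  · exfalso
    have hmem : x ∈ {x | x ∈ Icc (0:ℝ) 1 ∧ g x = 0} := ⟨hx, h.symm⟩
    have : β ≤ x := by
      rw [hβ]; exact csInf_le ⟨0, fun z hz => hz.1.1⟩ hmem
    linarith

lemma st8_alpha_le_beta (hg : MemCconv g) (hα : 0 < α) (hασ : α ≤ stride g)
    (hβ : β = sInf {x | x ∈ Icc (0:ℝ) 1 ∧ g x = 0}) : α ≤ β := by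
  obtain ⟨hβmem, hgβ⟩ := st8_beta_mem hg hβ
  have := st8_stride_le hg hα hασ β hβmem
  rw [hgβ] at this; linarith

lemma st8_chord (hg : MemCconv g) (hβpos : 0 < β)
    (hβ : β = sInf {x | x ∈ Icc (0:ℝ) 1 ∧ g x = 0}) :
    ∀ x ∈ Icc 0 β, g x ≤ 1 - x / β := by
  intro x hx
  obtain ⟨hβmem, hgβ⟩ := st8_beta_mem hg hβ
  have h0 : (0:ℝ) ∈ Icc (0:ℝ) 1 := by norm_num
  have ha : (0:ℝ) ≤ 1 - x / β := by
    rw [sub_nonneg, div_le_one hβpos]; exact hx.2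
  have hb : (0:ℝ) ≤ x / β := div_nonneg hx.1 hβpos.le
  have hab : (1 - x / β) + x / β = 1 := by ring
  have := hg.2.2 h0 hβmem ha hb hab
  have hx' : (1 - x / β) • (0:ℝ) + (x / β) • β = x := by
    rw [smul_eq_mul, smul_eq_mul, mul_zero, zero_add]; field_simp
  rw [hx'] at this
  rw [hg.1.1.2.2.1, hgβ] at this
  calc g x ≤ (1 - x/β) * 1 + (x/β) * 0 := this
    _ = 1 - x/β := by ring

lemma st8_strict (hg : MemCconv g)
    (hβ : β = sInf {x | x ∈ Icc (0:ℝ) 1 ∧ g x = 0}) :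
    ∀ x ∈ Icc (0:ℝ) 1, ∀ y ∈ Icc (0:ℝ) 1, x < y → 0 < g y → g y < g x := by
  intro x hx y hy hxy hgy
  obtain ⟨hβmem, hgβ⟩ := st8_beta_mem hg hβ
  have hyβ : y < β := by
    by_contra hc
    push_neg at hc
    have := st8_gzero hg hβ y hy hc
    linarith
  have hle : g y ≤ g x := hg.1.1.2.1 hx hy hxy.le
  rcases hle.lt_or_eq with h | h
  · exact h
  · exfalso
    have hβx : 0 < β - x := by linarith [hx.1]
    set a := (β - y) / (β - x) with hadef
    set b := (y - x) / (β - x) with hbdef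
    have ha : 0 ≤ a := div_nonneg (by linarith) hβx.le
    have hb : 0 ≤ b := div_nonneg (by linarith) hβx.le
    have hne : β - x ≠ 0 := ne_of_gt hβx
    have hab : a + b = 1 := by rw [hadef, hbdef]; field_simp; ring
    have hcomb := hg.2.2 hx hβmem ha hb hab
    have hyeq : a • x + b • β = y := by
      simp only [smul_eq_mul, hadef, hbdef]
      field_simp; ring
    rw [hyeq, hgβ] at hcomb
    simp only [smul_eq_mul] at hcomb
    have ha1 : a < 1 := by
      rw [hadef, div_lt_one hβx]; linarith
    have : g y ≤ a * g x := by linarith [hcomb]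
    rw [h] at this
    nlinarith

end St8

section St8B

variable {g : ℝ → ℝ} {α β : ℝ}

lemma st8_A_bdd (y : ℝ) : BddAbove {x | x ∈ Icc (0:ℝ) 1 ∧ y ≤ g x} :=
  ⟨1, fun x hx => hx.1.2⟩

lemma st8_A_ne (hg : MemCconv g) {y : ℝ} (hy : y ≤ 1) :
    {x | x ∈ Icc (0:ℝ) 1 ∧ y ≤ g x}.Nonempty :=
  ⟨0, ⟨by norm_num, by rw [hg.1.1.2.2.1]; exact hy⟩⟩

lemma st8_h_mem01 (hg : MemCconv g) (y : ℝ) : pseudoInv g y ∈ Icc (0:ℝ) 1 := by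
  unfold pseudoInv
  by_cases hy : y ≤ 1
  · constructor
    · exact le_csSup (st8_A_bdd y) ⟨by norm_num, by rw [hg.1.1.2.2.1]; exact hy⟩
    · exact csSup_le (st8_A_ne hg hy) fun x hx => hx.1.2
  · push_neg at hy
    have : {x | x ∈ Icc (0:ℝ) 1 ∧ y ≤ g x} = ∅ := by
      ext x
      simp only [Set.mem_setOf_eq, Set.mem_empty_iff_false, iff_false, not_and]
      intro hx hyx
      exact absurd hyx (by linarith [(hg.1.1.1 x hx).2])
    rw [this, Real.sSup_empty]
    norm_num

lemma st8_h_spec (hg : MemCconv g) {y : ℝ} (hy : y ∈ Ioc (0:ℝ) 1) :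
    pseudoInv g y ∈ Icc (0:ℝ) 1 ∧ y ≤ g (pseudoInv g y) := by
  have hset : {x | x ∈ Icc (0:ℝ) 1 ∧ y ≤ g x} = Icc (0:ℝ) 1 ∩ g ⁻¹' (Ici y) := by
    ext x; simp [Set.mem_inter_iff, Set.mem_preimage]
  have hcl : IsClosed {x | x ∈ Icc (0:ℝ) 1 ∧ y ≤ g x} := by
    rw [hset]
    exact hg.1.2.1.preimage_isClosed_of_isClosed isClosed_Icc isClosed_Ici
  have := hcl.csSup_mem (st8_A_ne hg hy.2) (st8_A_bdd y)
  exact ⟨this.1, this.2⟩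

lemma st8_h_le {y x : ℝ} (hx : x ∈ Icc (0:ℝ) 1) (hyx : y ≤ g x) :
    x ≤ pseudoInv g y :=
  le_csSup (st8_A_bdd y) ⟨hx, hyx⟩

/-- exact inverse property -/
lemma st8_h_inv (hg : MemCconv g)
    (hβ : β = sInf {x | x ∈ Icc (0:ℝ) 1 ∧ g x = 0})
    {y : ℝ} (hy : y ∈ Ioc (0:ℝ) 1) : g (pseudoInv g y) = y := by
  obtain ⟨hmem, hge⟩ := st8_h_spec hg hy
  rcases hge.lt_or_eq with hlt | heq
  · exfalso
    obtain ⟨hβmem, hgβ⟩ := st8_beta_mem hg hβ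
    have hhβ : pseudoInv g y ≤ β := by
      by_contra hc
      push_neg at hc
      have := st8_gzero hg hβ (pseudoInv g y) hmem hc.le
      rw [this] at hlt
      linarith [hy.1]
    have hsub : Icc (pseudoInv g y) β ⊆ Icc (0:ℝ) 1 :=
      Icc_subset_Icc hmem.1 hβmem.2
    have hcont : ContinuousOn g (Icc (pseudoInv g y) β) := hg.1.2.1.mono hsub
    have hy' : y ∈ Icc (g β) (g (pseudoInv g y)) := by
      rw [hgβ]; exact ⟨hy.1.le, hlt.le⟩
    obtain ⟨z, hz, hgz⟩ := intermediate_value_Icc' hhβ hcont hy'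
    have hzle : z ≤ pseudoInv g y := st8_h_le (hsub hz) (le_of_eq hgz.symm)
    have : z = pseudoInv g y := le_antisymm hzle hz.1
    rw [← this, hgz] at hlt
    exact lt_irrefl y hlt
  · exact heq.symm

lemma st8_h_lb (hg : MemCconv g) (hα : 0 < α) (hασ : α ≤ stride g)
    {y : ℝ} (hy : y ∈ Ioc (0:ℝ) 1) : α * (1 - y) ≤ pseudoInv g y := by
  have hα1 : α ≤ 1 := st8_alpha_le_one hg hα hασ
  have hx0 : α * (1 - y) ∈ Icc (0:ℝ) 1 := by
    constructor
    · exact mul_nonneg hα.le (by linarith [hy.2])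
    · nlinarith [hy.1, hy.2]
  have := st8_stride_le hg hα hασ _ hx0
  have hyg : y ≤ g (α * (1 - y)) := by nlinarith
  exact st8_h_le hx0 hyg

lemma st8_h_ub (hg : MemCconv g) (hβpos : 0 < β)
    (hβ : β = sInf {x | x ∈ Icc (0:ℝ) 1 ∧ g x = 0})
    {y : ℝ} (hy : y ∈ Ioc (0:ℝ) 1) : pseudoInv g y ≤ β * (1 - y) := by
  obtain ⟨hmem, hge⟩ := st8_h_spec hg hy
  have hhβ : pseudoInv g y ≤ β := by
    by_contra hc
    push_neg at hc
    have := st8_gzero hg hβ (pseudoInv g y) hmem hc.le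
    rw [this] at hge
    linarith [hy.1]
  have hch := st8_chord hg hβpos hβ (pseudoInv g y) ⟨hmem.1, hhβ⟩
  have : y ≤ 1 - pseudoInv g y / β := le_trans hge hch
  have h2 : pseudoInv g y / β ≤ 1 - y := by linarith
  rw [div_le_iff₀ hβpos] at h2
  linarith

lemma st8_h_anti : Antitone (pseudoInv g) := by
  intro y y' hyy'
  by_cases hne : {x | x ∈ Icc (0:ℝ) 1 ∧ y' ≤ g x}.Nonempty
  · exact csSup_le_csSup (st8_A_bdd y) hne fun x hx => ⟨hx.1, le_trans hyy' hx.2⟩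
  · rw [Set.not_nonempty_iff_eq_empty] at hne
    unfold pseudoInv
    rw [hne, Real.sSup_empty]
    by_cases hne2 : {x | x ∈ Icc (0:ℝ) 1 ∧ y ≤ g x}.Nonempty
    · obtain ⟨x, hx⟩ := hne2
      exact le_trans hx.1.1 (le_csSup (st8_A_bdd y) hx)
    · rw [Set.not_nonempty_iff_eq_empty] at hne2
      rw [hne2, Real.sSup_empty]

/-- three-point convexity of the pseudo-inverse on (0,1] -/
lemma st8_h_conv3 (hg : MemCconv g)
    (hβ : β = sInf {x | x ∈ Icc (0:ℝ) 1 ∧ g x = 0})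
    {u p y : ℝ} (hu : u ∈ Ioc (0:ℝ) 1) (hp : p ∈ Ioc (0:ℝ) 1) (hy : y ∈ Ioc (0:ℝ) 1)
    (hup : u ≤ p) (hpy : p ≤ y) :
    (y - u) * pseudoInv g p ≤ (y - p) * pseudoInv g u + (p - u) * pseudoInv g y := by
  rcases eq_or_lt_of_le (le_trans hup hpy) with heq | huy
  · have h1 : u = p := le_antisymm hup (by rw [← heq] at hpy; exact hpy)
    subst h1
    have h2 : u = y := heq
    subst h2
    simp
  · have hyu : (0:ℝ) < y - u := by linarith
    set a := (y - p) / (y - u) with hadef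
    set b := (p - u) / (y - u) with hbdef
    have ha : 0 ≤ a := div_nonneg (by linarith) hyu.le
    have hb : 0 ≤ b := div_nonneg (by linarith) hyu.le
    have hne : y - u ≠ 0 := ne_of_gt hyu
    have hab : a + b = 1 := by rw [hadef, hbdef]; field_simp; ring
    obtain ⟨humem, _⟩ := st8_h_spec hg hu
    obtain ⟨hymem, _⟩ := st8_h_spec hg hy
    have hinvu := st8_h_inv hg hβ hu
    have hinvy := st8_h_inv hg hβ hy
    have hcomb := hg.2.2 humem hymem ha hb hab
    simp only [smul_eq_mul] at hcomb
    rw [hinvu, hinvy] at hcomb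
    have hp' : a * u + b * y = p := by rw [hadef, hbdef]; field_simp; ring
    rw [hp'] at hcomb
    -- hcomb : g (a * pseudoInv g u + b * pseudoInv g y) ≤ p
    set xbar := a * pseudoInv g u + b * pseudoInv g y with hxbar
    have hxbarmem : xbar ∈ Icc (0:ℝ) 1 := by
      constructor
      · exact add_nonneg (mul_nonneg ha humem.1) (mul_nonneg hb hymem.1)
      · nlinarith [humem.1, humem.2, hymem.1, hymem.2]
    have hple : pseudoInv g p ≤ xbar := by
      apply csSup_le (st8_A_ne hg hp.2)
      intro x hx
      by_contra hc
      push_neg at hc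
      have hgle : g x ≤ g xbar := hg.1.1.2.1 hxbarmem hx.1 hc.le
      have h1 : p ≤ g x := hx.2
      have h2 : g xbar = p := le_antisymm hcomb (le_trans h1 hgle)
      have h3 : g x = p := le_antisymm (h2 ▸ hgle) h1
      have := st8_strict hg hβ xbar hxbarmem x hx.1 hc (by rw [h3]; exact hp.1)
      rw [h2, h3] at this
      exact lt_irrefl p this
    have hxbareq : (y - u) * xbar = (y - p) * pseudoInv g u + (p - u) * pseudoInv g y := by
      rw [hxbar, hadef, hbdef]; field_simp; try ring
    calc (y - u) * pseudoInv g p ≤ (y - u) * xbar :=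
          mul_le_mul_of_nonneg_left hple hyu.le
      _ = _ := hxbareq

end St8B

section St8C

variable {g : ℝ → ℝ} {α β : ℝ}

lemma st8_cubic (c0 c1 c2 a b : ℝ) :
    ∫ y in a..b, (c0 + c1*y + c2*y^2) =
      (c0*b + c1*b^2/2 + c2*b^3/3) - (c0*a + c1*a^2/2 + c2*a^3/3) := by
  have h : ∀ y : ℝ, HasDerivAt (fun t => c0*t + c1*t^2/2 + c2*t^3/3)
      (c0 + c1*y + c2*y^2) y := by
    intro y
    have h1 : HasDerivAt (fun t : ℝ => t) 1 y := hasDerivAt_id y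
    have h2 : HasDerivAt (fun t : ℝ => t^2) (2*y) y := by
      simpa using hasDerivAt_pow 2 y
    have h3 : HasDerivAt (fun t : ℝ => t^3) (3*y^2) y := by
      simpa using hasDerivAt_pow 3 y
    have h4 := (h1.const_mul c0).add ((h2.const_mul (c1/2)).add (h3.const_mul (c2/3)))
    refine (h4.congr_deriv (by ring)).congr_of_eventuallyEq (Eventually.of_forall fun t => ?_)
    simp only [Pi.add_apply]; ring
  rw [intervalIntegral.integral_eq_sub_of_hasDerivAt (fun y _ => h y)
    ((by continuity : Continuous fun y : ℝ => c0 + c1*y + c2*y^2).intervalIntegrable a b)]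

lemma st8_finite : IsFiniteMeasure (volume.restrict (Ioc (0:ℝ) 1)) := by
  constructor
  rw [Measure.restrict_apply_univ]
  simp [Real.volume_Ioc]

lemma st8_fubiniA (hg : MemCconv g) :
    ∫ x in Ioc (0:ℝ) 1, (∫ y in x..(1:ℝ), pseudoInv g y) =
      ∫ y in Ioc (0:ℝ) 1, y * pseudoInv g y := by
  set h := pseudoInv g with hh
  have hmeas : Measurable h := (st8_h_anti (g := g)).measurable
  have hbd : ∀ y, h y ∈ Icc (0:ℝ) 1 := st8_h_mem01 hg
  have hfm : Measurable (fun p : ℝ × ℝ => if p.1 < p.2 then h p.2 else 0) := by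
    exact Measurable.ite (measurableSet_lt measurable_fst measurable_snd)
      (hmeas.comp measurable_snd) measurable_const
  haveI := st8_finite
  have hint : Integrable (Function.uncurry fun x y : ℝ => if x < y then h y else 0)
      ((volume.restrict (Ioc (0:ℝ) 1)).prod (volume.restrict (Ioc (0:ℝ) 1))) := by
    refine Integrable.mono' (integrable_const 1) hfm.aestronglyMeasurable
      (ae_of_all _ fun p => ?_)
    simp only [Function.uncurry]
    split
    · rw [Real.norm_eq_abs, abs_le]
      exact ⟨by linarith [(hbd p.2).1], (hbd p.2).2⟩
    · simp
  have hswap := MeasureTheory.integral_integral_swap hint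
  have hL : ∀ x ∈ Ioc (0:ℝ) 1,
      (∫ y in Ioc (0:ℝ) 1, if x < y then h y else 0) = ∫ y in x..(1:ℝ), h y := by
    intro x hx
    have h1 : (fun y => if x < y then h y else 0) = (Ioi x).indicator h := by
      funext y; simp [Set.indicator, Set.mem_Ioi]
    rw [h1, MeasureTheory.integral_indicator measurableSet_Ioi,
        Measure.restrict_restrict measurableSet_Ioi]
    have h2 : Ioi x ∩ Ioc (0:ℝ) 1 = Ioc x 1 := by
      ext z; simp only [Set.mem_inter_iff, Set.mem_Ioi, Set.mem_Ioc]
      constructor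
      · rintro ⟨h3, _, h5⟩; exact ⟨h3, h5⟩
      · rintro ⟨h3, h4⟩; exact ⟨h3, lt_trans hx.1 h3, h4⟩
    rw [h2, ← intervalIntegral.integral_of_le hx.2]
  have hR : ∀ y ∈ Ioc (0:ℝ) 1,
      (∫ x in Ioc (0:ℝ) 1, if x < y then h y else 0) = y * h y := by
    intro y hy
    have h1 : (fun x => if x < y then h y else 0) = (Iio y).indicator (fun _ => h y) := by
      funext x; simp [Set.indicator, Set.mem_Iio]
    rw [h1, MeasureTheory.integral_indicator measurableSet_Iio,
        Measure.restrict_restrict measurableSet_Iio, MeasureTheory.setIntegral_const]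
    have h2 : Iio y ∩ Ioc (0:ℝ) 1 = Ioo 0 y := by
      ext z; simp only [Set.mem_inter_iff, Set.mem_Iio, Set.mem_Ioc, Set.mem_Ioo]
      constructor
      · rintro ⟨h3, h4, _⟩; exact ⟨h4, h3⟩
      · rintro ⟨h3, h4⟩; exact ⟨h4, h3, le_trans h4.le hy.2⟩
    rw [h2, measureReal_def, Real.volume_Ioo, ENNReal.toReal_ofReal (by linarith [hy.1] : (0:ℝ) ≤ y - 0),
      smul_eq_mul, sub_zero]
  calc ∫ x in Ioc (0:ℝ) 1, (∫ y in x..(1:ℝ), h y)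
      = ∫ x in Ioc (0:ℝ) 1, ∫ y in Ioc (0:ℝ) 1, (if x < y then h y else 0) :=
        (setIntegral_congr_fun measurableSet_Ioc fun x hx => (hL x hx).symm)
    _ = ∫ y in Ioc (0:ℝ) 1, ∫ x in Ioc (0:ℝ) 1, (if x < y then h y else 0) := hswap
    _ = ∫ y in Ioc (0:ℝ) 1, y * h y :=
        setIntegral_congr_fun measurableSet_Ioc hR

lemma st8_fubiniB (hg : MemCconv g)
    (hβ : β = sInf {x | x ∈ Icc (0:ℝ) 1 ∧ g x = 0}) :
    ∫ y in Ioc (0:ℝ) 1, pseudoInv g y = ∫ x in Ioc (0:ℝ) 1, g x := by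
  set h := pseudoInv g with hh
  have hbd : ∀ y, h y ∈ Icc (0:ℝ) 1 := st8_h_mem01 hg
  set gc : ℝ → ℝ := fun x => g (max 0 (min 1 x)) with hgc
  have hclamp : Continuous fun x : ℝ => max 0 (min 1 x) :=
    continuous_const.max (continuous_const.min continuous_id)
  have hmaps : ∀ x : ℝ, max 0 (min 1 x) ∈ Icc (0:ℝ) 1 := fun x =>
    ⟨le_max_left _ _, max_le (by norm_num) (min_le_left _ _)⟩
  have hgccont : Continuous gc := ContinuousOn.comp_continuous hg.1.2.1 hclamp hmaps
  have hgceq : ∀ x ∈ Icc (0:ℝ) 1, gc x = g x := by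
    intro x hx
    have : max 0 (min 1 x) = x := by rw [min_eq_right hx.2, max_eq_right hx.1]
    rw [hgc]; simp only [this]
  have hfm : Measurable (fun p : ℝ × ℝ => if p.2 ≤ gc p.1 then (1:ℝ) else 0) := by
    exact Measurable.ite (measurableSet_le measurable_snd
      (hgccont.measurable.comp measurable_fst)) measurable_const measurable_const
  haveI := st8_finite
  have hint : Integrable (Function.uncurry fun x y : ℝ => if y ≤ gc x then (1:ℝ) else 0)
      ((volume.restrict (Ioc (0:ℝ) 1)).prod (volume.restrict (Ioc (0:ℝ) 1))) := by
    refine Integrable.mono' (integrable_const 1) hfm.aestronglyMeasurable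
      (ae_of_all _ fun p => ?_)
    simp only [Function.uncurry]
    split <;> simp
  have hswap := MeasureTheory.integral_integral_swap hint
  have hL : ∀ x ∈ Ioc (0:ℝ) 1,
      (∫ y in Ioc (0:ℝ) 1, if y ≤ gc x then (1:ℝ) else 0) = g x := by
    intro x hx
    have hxI : x ∈ Icc (0:ℝ) 1 := ⟨hx.1.le, hx.2⟩
    have hgmem := hg.1.1.1 x hxI
    have h1 : (fun y => if y ≤ gc x then (1:ℝ) else 0)
        = (Iic (gc x)).indicator (fun _ => (1:ℝ)) := by
      funext y; simp [Set.indicator, Set.mem_Iic]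
    rw [h1, MeasureTheory.integral_indicator measurableSet_Iic,
        Measure.restrict_restrict measurableSet_Iic, MeasureTheory.setIntegral_const,
        hgceq x hxI]
    have h2 : Iic (g x) ∩ Ioc (0:ℝ) 1 = Ioc 0 (g x) := by
      ext z; simp only [Set.mem_inter_iff, Set.mem_Iic, Set.mem_Ioc]
      constructor
      · rintro ⟨h3, h4, _⟩; exact ⟨h4, h3⟩
      · rintro ⟨h3, h4⟩; exact ⟨h4, h3, le_trans h4 hgmem.2⟩
    rw [h2, measureReal_def, Real.volume_Ioc, ENNReal.toReal_ofReal (by linarith [hgmem.1] : (0:ℝ) ≤ g x - 0),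
      smul_eq_mul, sub_zero, mul_one]
  have hR : ∀ y ∈ Ioc (0:ℝ) 1,
      (∫ x in Ioc (0:ℝ) 1, if y ≤ gc x then (1:ℝ) else 0) = h y := by
    intro y hy
    have hiff : ∀ x ∈ Ioc (0:ℝ) 1, (y ≤ gc x ↔ x ≤ h y) := by
      intro x hx
      have hxI : x ∈ Icc (0:ℝ) 1 := ⟨hx.1.le, hx.2⟩
      rw [hgceq x hxI]
      constructor
      · intro hyx; exact st8_h_le hxI hyx
      · intro hxh
        have := hg.1.1.2.1 hxI (hbd y) hxh
        rw [st8_h_inv hg hβ hy] at this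
        exact this
    have h1 : EqOn (fun x => if y ≤ gc x then (1:ℝ) else 0)
        ((Iic (h y)).indicator (fun _ => (1:ℝ))) (Ioc (0:ℝ) 1) := by
      intro x hx
      simp only [Set.indicator, Set.mem_Iic]
      exact if_congr (hiff x hx) rfl rfl
    rw [setIntegral_congr_fun measurableSet_Ioc h1,
        MeasureTheory.integral_indicator measurableSet_Iic,
        Measure.restrict_restrict measurableSet_Iic, MeasureTheory.setIntegral_const]
    have h2 : Iic (h y) ∩ Ioc (0:ℝ) 1 = Ioc 0 (h y) := by
      ext z; simp only [Set.mem_inter_iff, Set.mem_Iic, Set.mem_Ioc]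
      constructor
      · rintro ⟨h3, h4, _⟩; exact ⟨h4, h3⟩
      · rintro ⟨h3, h4⟩; exact ⟨h4, h3, le_trans h4 (hbd y).2⟩
    rw [h2, measureReal_def, Real.volume_Ioc, ENNReal.toReal_ofReal (by linarith [(hbd y).1] : (0:ℝ) ≤ h y - 0),
      smul_eq_mul, sub_zero, mul_one]
  calc ∫ y in Ioc (0:ℝ) 1, h y
      = ∫ y in Ioc (0:ℝ) 1, ∫ x in Ioc (0:ℝ) 1, (if y ≤ gc x then (1:ℝ) else 0) :=
        (setIntegral_congr_fun measurableSet_Ioc fun y hy => (hR y hy).symm)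
    _ = ∫ x in Ioc (0:ℝ) 1, ∫ y in Ioc (0:ℝ) 1, (if y ≤ gc x then (1:ℝ) else 0) := hswap.symm
    _ = ∫ x in Ioc (0:ℝ) 1, g x :=
        setIntegral_congr_fun measurableSet_Ioc hL

end St8C

section St8D

set_option maxHeartbeats 1000000 in
lemma st8_core {h : ℝ → ℝ} {α β γ : ℝ} (hα : 0 < α) (hαβ : α ≤ β) (hβ1 : β ≤ 1)
    (hγ1 : α / 2 ≤ γ) (hγ2 : 2 * γ ≤ β)
    (hlb : ∀ y ∈ Ioc (0:ℝ) 1, α * (1 - y) ≤ h y)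
    (hub : ∀ y ∈ Ioc (0:ℝ) 1, h y ≤ β * (1 - y))
    (hconv3 : ∀ u p y : ℝ, u ∈ Ioc (0:ℝ) 1 → p ∈ Ioc (0:ℝ) 1 → y ∈ Ioc (0:ℝ) 1 →
      u ≤ p → p ≤ y → (y - u) * h p ≤ (y - p) * h u + (p - u) * h y)
    (hint : IntervalIntegrable h volume 0 1)
    (hγh : ∫ y in Ioc (0:ℝ) 1, h y = γ) :
    α * β - 4 * α * γ + 4 * γ ^ 2 ≤ 6 * (β - α) * ∫ y in Ioc (0:ℝ) 1, y * h y := by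
  set J := ∫ y in Ioc (0:ℝ) 1, y * h y with hJdef
  clear_value J
  set M := β - α with hM
  clear_value M
  have hM0 : 0 ≤ M := by rw [hM]; linarith
  have hIh : IntegrableOn h (Ioc (0:ℝ) 1) := hint.1
  have hIyh : IntegrableOn (fun y => y * h y) (Ioc (0:ℝ) 1) :=
    (hint.continuousOn_mul continuous_id.continuousOn).1
  have hIpoly : IntegrableOn (fun y => y * (α * (1 - y))) (Ioc (0:ℝ) 1) :=
    (Continuous.integrableOn_Ioc (by continuity))
  have hA6 : ∫ y in Ioc (0:ℝ) 1, y * (α * (1 - y)) = α / 6 := by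
    rw [← intervalIntegral.integral_of_le (by norm_num : (0:ℝ) ≤ 1),
      intervalIntegral.integral_congr
        (g := fun y => 0 + α * y + (-α) * y^2) (fun y _ => by simp only; ring),
      st8_cubic]
    ring
  have hJlb : α / 6 ≤ J := by
    rw [hJdef, ← hA6]
    exact setIntegral_mono_on hIpoly hIyh measurableSet_Ioc
      (fun y hy => mul_le_mul_of_nonneg_left (hlb y hy) hy.1.le)
  rcases hM0.lt_or_eq with hMpos | hMeq
  case inr =>
    have h1 : β = α := by rw [hM] at hMeq; linarith
    have h2 : γ = α / 2 := by
      have := hγ2; rw [h1] at this; linarith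
    rw [← hMeq, h1, h2]
    nlinarith
  case inl =>
  set E := γ - α / 2 with hE
  clear_value E
  have hE0 : 0 ≤ E := by rw [hE]; linarith
  have hEM : 2 * E ≤ M := by rw [hE, hM]; linarith
  rcases hE0.lt_or_eq with hEpos | hEeq
  case inr =>
    have h2 : γ = α / 2 := by rw [hE] at hEeq; linarith
    rw [h2]
    nlinarith [mul_le_mul_of_nonneg_left hJlb hMpos.le]
  case inl =>
  set s := 2 * E / M with hs
  have hs0 : 0 < s := by rw [hs]; positivity
  have hs1 : s ≤ 1 := by rw [hs, div_le_one hMpos]; linarith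
  have hMs : M * s = 2 * E := by rw [hs]; field_simp
  clear_value s
  set t : ℝ → ℝ := fun y => (M / s) * max (s - y) 0 with ht
  have ht_cont : Continuous t := by
    rw [ht]
    exact continuous_const.mul ((continuous_const.sub continuous_id).max continuous_const)
  clear_value t
  set d : ℝ → ℝ := fun y => h y - α * (1 - y) - t y with hd
  clear_value d
  have hts : ∀ z : ℝ, z ≤ s → t z = (M / s) * (s - z) := by
    intro z hz
    simp only [ht]
    rw [max_eq_left (by linarith)]
  have htz : ∀ z : ℝ, s ≤ z → t z = 0 := by
    intro z hz
    simp only [ht]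
    rw [max_eq_right (by linarith), mul_zero]
  have hclaim : ∀ y ∈ Ioc (0:ℝ) 1, (∃ p, p ∈ Ioc (0:ℝ) 1 ∧ p < y ∧ 0 < d p) → 0 ≤ d y := by
    rintro y hy ⟨p, hp, hpy, hdp⟩
    by_contra hdy
    push_neg at hdy
    have hys : y < s := by
      by_contra hc
      push_neg at hc
      have h1 : d y = h y - α * (1 - y) - 0 := by
        simp only [hd]; rw [htz y hc]
      have h2 := hlb y hy
      rw [h1] at hdy; linarith
    have hps : p < s := lt_trans hpy hys
    set u := min (p / 2) (s * d p / (2 * M)) with hu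
    have hu0 : 0 < u := lt_min (by linarith [hp.1]) (by positivity)
    have hup : u < p := lt_of_le_of_lt (min_le_left _ _) (by linarith [hp.1])
    have huI : u ∈ Ioc (0:ℝ) 1 := ⟨hu0, by linarith [hp.2]⟩
    have hus : u < s := lt_trans hup hps
    have h3 := hconv3 u p y huI hp hy hup.le hpy.le
    have haff : (y - u) * (α * (1 - p) + (M / s) * (s - p))
        = (y - p) * (α * (1 - u) + (M / s) * (s - u))
          + (p - u) * (α * (1 - y) + (M / s) * (s - y)) := by ring
    have e1 : d p = h p - (α * (1 - p) + (M / s) * (s - p)) := by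
      simp only [hd]; rw [hts p hps.le]; ring
    have e2 : d u = h u - (α * (1 - u) + (M / s) * (s - u)) := by
      simp only [hd]; rw [hts u hus.le]; ring
    have e3 : d y = h y - (α * (1 - y) + (M / s) * (s - y)) := by
      simp only [hd]; rw [hts y hys.le]; ring
    have hd3 : (y - u) * d p ≤ (y - p) * d u + (p - u) * d y := by
      rw [e1, e2, e3]; linarith [h3, haff]
    have hdu_ge : d p ≤ d u := by
      have k1 : (y - p) * d p ≤ (y - p) * d u := by
        nlinarith [hd3, mul_pos (sub_pos.mpr hup) hdp,
          mul_pos (sub_pos.mpr hup) (neg_pos.mpr hdy)]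
      exact le_of_mul_le_mul_left k1 (by linarith)
    have hdiv : (M / s) * (s - u) = M - M * u / s := by field_simp
    have hβα : β * (1 - u) - α * (1 - u) = M * (1 - u) := by rw [hM]; ring
    have hdu_le : d u ≤ M * u / s := by
      have h5 := hub u huI
      have h6 : d u ≤ β * (1 - u) - α * (1 - u) - (M / s) * (s - u) := by
        rw [e2]; linarith
      rw [hdiv] at h6
      have h7 : 0 ≤ M * u := mul_nonneg hMpos.le hu0.le
      linarith [h6, hβα, h7]
    have h6 : M * u / s ≤ d p / 2 := by
      have h5 : u ≤ s * d p / (2 * M) := min_le_right _ _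
      rw [div_le_div_iff₀ hs0 two_pos]
      have h8 : M * (s * d p / (2 * M)) * 2 = d p * s := by field_simp
      nlinarith [mul_le_mul_of_nonneg_left h5 hMpos.le]
    linarith
  obtain ⟨c, hc0, hc1, hsign⟩ : ∃ c : ℝ, 0 ≤ c ∧ c ≤ 1 ∧
      ∀ y ∈ Ioc (0:ℝ) 1, 0 ≤ (y - c) * d y := by
    by_cases hP : {p : ℝ | p ∈ Ioc (0:ℝ) 1 ∧ 0 < d p}.Nonempty
    · set c := sInf {p : ℝ | p ∈ Ioc (0:ℝ) 1 ∧ 0 < d p} with hc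
      have hbdd : BddBelow {p : ℝ | p ∈ Ioc (0:ℝ) 1 ∧ 0 < d p} :=
        ⟨0, fun p hp => hp.1.1.le⟩
      obtain ⟨p0, hp0⟩ := hP
      refine ⟨c, le_csInf ⟨p0, hp0⟩ (fun p hp => hp.1.1.le),
        le_trans (csInf_le hbdd hp0) hp0.1.2, ?_⟩
      intro y hy
      rcases lt_trichotomy y c with hlt | heq | hgt
      · have hdy : d y ≤ 0 := by
          by_contra hc2; push_neg at hc2
          have : c ≤ y := csInf_le hbdd ⟨hy, hc2⟩
          linarith
        nlinarith [mul_nonneg (by linarith : (0:ℝ) ≤ c - y) (by linarith : (0:ℝ) ≤ -d y)]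
      · rw [heq]; simp
      · obtain ⟨p, hp, hplt⟩ := exists_lt_of_csInf_lt ⟨p0, hp0⟩ hgt
        have := hclaim y hy ⟨p, hp.1, hplt, hp.2⟩
        exact mul_nonneg (by linarith) this
    · refine ⟨1, zero_le_one, le_rfl, fun y hy => ?_⟩
      have hdy : d y ≤ 0 := by
        by_contra hc2; push_neg at hc2
        exact hP ⟨y, hy, hc2⟩
      nlinarith [mul_nonneg (by linarith [hy.2] : (0:ℝ) ≤ 1 - y) (by linarith : (0:ℝ) ≤ -d y)]
  have hnn : 0 ≤ ∫ y in Ioc (0:ℝ) 1, (y - c) * d y :=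
    setIntegral_nonneg measurableSet_Ioc hsign
  have hIch : IntegrableOn (fun y => (y - c) * h y) (Ioc (0:ℝ) 1) :=
    (hint.continuousOn_mul (by fun_prop)).1
  have hIcp : IntegrableOn (fun y => (y - c) * (α * (1 - y))) (Ioc (0:ℝ) 1) :=
    Continuous.integrableOn_Ioc (by continuity)
  have hcont_ct : Continuous fun y => (y - c) * t y :=
    (continuous_id.sub continuous_const).mul ht_cont
  have hIct : IntegrableOn (fun y => (y - c) * t y) (Ioc (0:ℝ) 1) :=
    Continuous.integrableOn_Ioc hcont_ct
  have hsplit : (fun y => (y - c) * d y)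
      = fun y => (y - c) * h y - (y - c) * (α * (1 - y)) - (y - c) * t y := by
    funext y; simp only [hd]; ring
  rw [hsplit] at hnn
  have e12 := MeasureTheory.integral_sub (μ := volume.restrict (Ioc (0:ℝ) 1)) (hIch.sub hIcp) hIct
  simp only [Pi.sub_apply] at e12
  rw [e12] at hnn
  have e34 := MeasureTheory.integral_sub (μ := volume.restrict (Ioc (0:ℝ) 1)) hIch hIcp
  rw [e34] at hnn
  have T1 : ∫ y in Ioc (0:ℝ) 1, (y - c) * h y = J - c * γ := by
    have hfun : (fun y => (y - c) * h y) = fun y => y * h y - c * h y := by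
      funext y; ring
    rw [hfun, integral_sub hIyh (hIh.const_mul c), MeasureTheory.integral_const_mul, hγh, hJdef]
  have T2 : ∫ y in Ioc (0:ℝ) 1, (y - c) * (α * (1 - y)) = α / 6 - c * (α / 2) := by
    rw [← intervalIntegral.integral_of_le (by norm_num : (0:ℝ) ≤ 1),
      intervalIntegral.integral_congr
        (g := fun y => (-(c*α)) + (α + c*α) * y + (-α) * y^2) (fun y _ => by simp only; ring),
      st8_cubic]
    ring
  have T3 : ∫ y in Ioc (0:ℝ) 1, (y - c) * t y = M * s^2 / 6 - c * (M * s / 2) := by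
    rw [← intervalIntegral.integral_of_le (by norm_num : (0:ℝ) ≤ 1),
      ← intervalIntegral.integral_add_adjacent_intervals
        (hcont_ct.intervalIntegrable 0 s) (hcont_ct.intervalIntegrable s 1)]
    have hI1 : ∫ y in (0:ℝ)..s, (y - c) * t y = M * s^2 / 6 - c * (M * s / 2) := by
      rw [intervalIntegral.integral_congr
          (g := fun y => ((M/s) * (-(c*s))) + ((M/s) * (s + c)) * y + (-(M/s)) * y^2) ?_,
        st8_cubic]
      · field_simp
        ring
      · intro y hy
        rw [uIcc_of_le hs0.le] at hy
        simp only
        rw [hts y hy.2]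
        ring
    have hI2 : ∫ y in s..(1:ℝ), (y - c) * t y = 0 := by
      rw [intervalIntegral.integral_congr (g := fun _ => (0:ℝ)) ?_,
        intervalIntegral.integral_zero]
      intro y hy
      rw [uIcc_of_le hs1] at hy
      simp only
      rw [htz y hy.1, mul_zero]
    rw [hI1, hI2]; ring
  rw [T1, T2, T3] at hnn
  have h0 : γ - α / 2 - M * s / 2 = 0 := by
    have : E = γ - α / 2 := hE
    linarith [hMs]
  have h0c : c * (γ - α / 2 - M * s / 2) = 0 := by rw [h0, mul_zero]
  have hJ6 : α / 6 + M * s^2 / 6 ≤ J := by nlinarith [hnn, h0c]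
  have h7 : 6 * M * (α / 6 + M * s^2 / 6) ≤ 6 * M * J :=
    mul_le_mul_of_nonneg_left hJ6 (by linarith)
  have h8 : 6 * M * (α / 6 + M * s^2 / 6) = M * α + (M * s)^2 := by ring
  rw [h8, hMs] at h7
  have h9 : M * α + (2 * E)^2 = α * β - 4 * α * γ + 4 * γ^2 := by
    rw [hE, hM]; ring
  linarith [h7, h9]

end St8D

/-- for `g ∈ 𝒞̆`, `0 < α ≤ σ g`, `β = inf {x ∈ [0,1] | g x = 0}` and
`γ = ∫₀¹ g`, we have `αβ - 4αγ + 4γ² ≤ 6(β - α)·γ·∫₀¹ Tg`. -/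
theorem stmt8 (g : ℝ → ℝ) (hg : MemCconv g) (α β γ : ℝ)
    (hα : 0 < α) (hασ : α ≤ stride g)
    (hβ : β = sInf {x | x ∈ Icc (0:ℝ) 1 ∧ g x = 0})
    (hγ : γ = ∫ x in (0:ℝ)..1, g x) :
    α * β - 4 * α * γ + 4 * γ ^ 2 ≤ 6 * (β - α) * γ * ∫ x in (0:ℝ)..1, Tmap g x := by
  obtain ⟨hβmem, hgβ⟩ := st8_beta_mem hg hβ
  have hαβ : α ≤ β := st8_alpha_le_beta hg hα hασ hβ
  have hβpos : 0 < β := lt_of_lt_of_le hα hαβ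
  have hα1 : α ≤ 1 := st8_alpha_le_one hg hα hασ
  have hγpos : 0 < γ := by rw [hγ]; exact hg.1.1.2.2.2
  have hanti : AntitoneOn g (Icc 0 1) := hg.1.1.2.1
  have hIg' : ∀ a b : ℝ, 0 ≤ a → a ≤ b → b ≤ 1 → IntervalIntegrable g volume a b := by
    intro a b h0a hab hb1
    apply AntitoneOn.intervalIntegrable
    apply hanti.mono
    intro z hz
    rw [uIcc_of_le hab] at hz
    exact ⟨le_trans h0a hz.1, le_trans hz.2 hb1⟩
  have hpoly1 : ∫ x in (0:ℝ)..α, (1 - x/α) = α/2 := by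
    rw [intervalIntegral.integral_congr (g := fun x => 1 + (-(1/α))*x + 0*x^2)
        (fun x _ => by simp only; ring), st8_cubic]
    field_simp
    ring
  have hlow : α/2 ≤ γ := by
    have h1 : ∫ x in (0:ℝ)..α, (1 - x/α) ≤ ∫ x in (0:ℝ)..α, g x := by
      apply intervalIntegral.integral_mono_on hα.le
        ((by continuity : Continuous fun x : ℝ => 1 - x/α).intervalIntegrable 0 α)
        (hIg' 0 α le_rfl hα.le hα1)
      intro x hx
      have hx1 : x ∈ Icc (0:ℝ) 1 := ⟨hx.1, le_trans hx.2 hα1⟩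
      have hstr := st8_stride_le hg hα hασ x hx1
      have hd : x / α * α = x := div_mul_cancel₀ x (ne_of_gt hα)
      nlinarith
    have h2 : 0 ≤ ∫ x in α..(1:ℝ), g x := by
      apply intervalIntegral.integral_nonneg hα1
      intro x hx
      exact (hg.1.1.1 x ⟨le_trans hα.le hx.1, hx.2⟩).1
    have h3 : γ = (∫ x in (0:ℝ)..α, g x) + ∫ x in α..(1:ℝ), g x := by
      rw [hγ, intervalIntegral.integral_add_adjacent_intervals
        (hIg' 0 α le_rfl hα.le hα1) (hIg' α 1 hα.le hα1 le_rfl)]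
    rw [hpoly1] at h1
    linarith
  have hpoly2 : ∫ x in (0:ℝ)..β, (1 - x/β) = β/2 := by
    rw [intervalIntegral.integral_congr (g := fun x => 1 + (-(1/β))*x + 0*x^2)
        (fun x _ => by simp only; ring), st8_cubic]
    field_simp
    ring
  have hhigh : 2*γ ≤ β := by
    have h1 : ∫ x in (0:ℝ)..β, g x ≤ β/2 := by
      rw [← hpoly2]
      apply intervalIntegral.integral_mono_on hβpos.le
        (hIg' 0 β le_rfl hβpos.le hβmem.2)
        ((by continuity : Continuous fun x : ℝ => 1 - x/β).intervalIntegrable 0 β)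
      intro x hx
      exact st8_chord hg hβpos hβ x hx
    have h2 : ∫ x in β..(1:ℝ), g x = 0 := by
      rw [intervalIntegral.integral_congr (g := fun _ => (0:ℝ)) ?_,
        intervalIntegral.integral_zero]
      intro x hx
      rw [uIcc_of_le hβmem.2] at hx
      exact st8_gzero hg hβ x ⟨le_trans hβmem.1 hx.1, hx.2⟩ hx.1
    have h3 : γ = (∫ x in (0:ℝ)..β, g x) + ∫ x in β..(1:ℝ), g x := by
      rw [hγ, intervalIntegral.integral_add_adjacent_intervals
        (hIg' 0 β le_rfl hβpos.le hβmem.2) (hIg' β 1 hβmem.1 hβmem.2 le_rfl)]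
    linarith
  have hγIoc : ∫ x in Ioc (0:ℝ) 1, g x = γ := by
    rw [hγ, intervalIntegral.integral_of_le zero_le_one]
  have hγh : ∫ y in Ioc (0:ℝ) 1, pseudoInv g y = γ := (st8_fubiniB hg hβ).trans hγIoc
  have hIh : IntervalIntegrable (pseudoInv g) volume 0 1 := by
    apply AntitoneOn.intervalIntegrable
    exact (st8_h_anti (g := g)).antitoneOn _
  have hcore := st8_core hα hαβ hβmem.2 hlow hhigh
    (fun y hy => st8_h_lb hg hα hασ hy)
    (fun y hy => st8_h_ub hg hβpos hβ hy)
    (fun u p y hu hp hy hup hpy => st8_h_conv3 hg hβ hu hp hy hup hpy)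
    hIh hγh
  have hT : (∫ x in (0:ℝ)..1, Tmap g x)
      = (∫ y in Ioc (0:ℝ) 1, y * pseudoInv g y) / γ := by
    simp only [Tmap]
    rw [← hγ, intervalIntegral.integral_div]
    congr 1
    rw [intervalIntegral.integral_of_le zero_le_one]
    exact st8_fubiniA hg
  rw [hT]
  have hfin : 6 * (β - α) * γ * ((∫ y in Ioc (0:ℝ) 1, y * pseudoInv g y) / γ)
      = 6 * (β - α) * (∫ y in Ioc (0:ℝ) 1, y * pseudoInv g y) := by
    field_simp
  rw [hfin]
  exact hcore
end
end

section
/- Every sequence (g_n)_{n ∈ ℕ} of functions in 𝒦 has a subsequence that converges uniformly on [0,1] to some function g ∈ 𝒦. -/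
open Set MeasureTheory Filter intervalIntegral

noncomputable section

open Topology BoundedContinuousFunction

lemma memK_lb {g : ℝ → ℝ} (hg : MemK g) : ∀ x ∈ Icc (0:ℝ) 1, 1 - 5*x ≤ g x := by
  intro x hx
  set S : Set ℝ := {α : ℝ | 0 ≤ α ∧ ∀ x ∈ Icc (0:ℝ) 1, α - x ≤ α * g x} with hS
  have hg1 : g 1 = 0 := hg.1.1.2.2
  have hgx1 : g x ≤ 1 := (hg.1.1.1.1 x hx).2
  have hSne : S.Nonempty := ⟨0, le_refl 0, fun y hy => by simpa using hy.1⟩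
  have hSbdd : BddAbove S := by
    refine ⟨1, fun α hα => ?_⟩
    have := hα.2 1 ⟨zero_le_one, le_refl 1⟩
    rw [hg1] at this; linarith
  have hstride : (1:ℝ)/5 ≤ sSup S := hg.2.1
  -- sSup S * (1 - g x) ≤ x
  have key : sSup S * (1 - g x) ≤ x := by
    rcases eq_or_lt_of_le hgx1 with h | h
    · simp [h]
      exact hx.1
    · have hpos : 0 < 1 - g x := by linarith
      have : sSup S ≤ x / (1 - g x) := by
        apply csSup_le hSne
        intro α hα
        have h2 := hα.2 x hx
        rw [le_div_iff₀ hpos]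
        nlinarith
      calc sSup S * (1 - g x) ≤ (x / (1 - g x)) * (1 - g x) := by
            exact mul_le_mul_of_nonneg_right this (le_of_lt hpos)
        _ = x := by field_simp
  have h15 : (1:ℝ)/5 * (1 - g x) ≤ x := by
    have h1g : 0 ≤ 1 - g x := by linarith
    calc (1:ℝ)/5 * (1 - g x) ≤ sSup S * (1 - g x) :=
          mul_le_mul_of_nonneg_right hstride h1g
      _ ≤ x := key
  linarith

lemma memK_lip {g : ℝ → ℝ} (hg : MemK g) {x y : ℝ} (hx : x ∈ Icc (0:ℝ) 1)
    (hy : y ∈ Icc (0:ℝ) 1) (hxy : x ≤ y) : g x - g y ≤ 5 * (y - x) := by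
  rcases eq_or_lt_of_le hxy with rfl | h
  · simp
  have hypos : 0 < y := lt_of_le_of_lt hx.1 h
  have hlb := memK_lb hg y hy
  have hconv := hg.1.2
  have h0mem : (0:ℝ) ∈ Icc (0:ℝ) 1 := ⟨le_refl 0, zero_le_one⟩
  set a : ℝ := (y - x)/y with ha
  set b : ℝ := x/y with hb
  have ha0 : 0 ≤ a := div_nonneg (by linarith) hypos.le
  have hb0 : 0 ≤ b := div_nonneg hx.1 hypos.le
  have hab : a + b = 1 := by rw [ha, hb]; field_simp; ring
  have hcx : a • (0:ℝ) + b • y = x := by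
    simp only [smul_eq_mul, mul_zero, zero_add, hb]
    field_simp
  have := hconv.2 h0mem hy ha0 hb0 hab
  rw [hcx] at this
  have hg0 : g 0 = 1 := hg.1.1.1.2.2.1
  rw [hg0] at this
  simp only [smul_eq_mul, mul_one] at this
  have hay : a * y = y - x := by rw [ha]; field_simp
  nlinarith

/-- every sequence in `𝒦` has a subsequence converging uniformly on `[0,1]`
to some member of `𝒦`. -/
theorem stmt12 (g : ℕ → ℝ → ℝ) (hg : ∀ n, MemK (g n)) :
    ∃ φ : ℕ → ℕ, StrictMono φ ∧ ∃ l : ℝ → ℝ, MemK l ∧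
      TendstoUniformlyOn (fun k => g (φ k)) l atTop (Icc 0 1) := by
  have hC : ∀ n, ContinuousOn (g n) (Icc 0 1) := fun n => (hg n).1.1.2.1
  have hmap : ∀ n, ∀ x ∈ Icc (0:ℝ) 1, g n x ∈ Icc (0:ℝ) 1 := fun n => (hg n).1.1.1.1
  have hanti : ∀ n, AntitoneOn (g n) (Icc 0 1) := fun n => (hg n).1.1.1.2.1
  have h0 : ∀ n, g n 0 = 1 := fun n => (hg n).1.1.1.2.2.1
  have h1 : ∀ n, g n 1 = 0 := fun n => (hg n).1.1.2.2
  have hconv : ∀ n, ConvexOn ℝ (Icc 0 1) (g n) := fun n => (hg n).1.2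
  have hint : ∀ n, (1:ℝ)/5 ≤ ∫ x in (0:ℝ)..1, g n x := fun n => (hg n).2.2
  have hdist : ∀ n, ∀ x ∈ Icc (0:ℝ) 1, ∀ y ∈ Icc (0:ℝ) 1,
      dist (g n x) (g n y) ≤ 5 * dist x y := by
    intro n x hx y hy
    rcases le_total x y with h | h
    · have hm := hanti n hx hy h
      have hk := memK_lip (hg n) hx hy h
      rw [Real.dist_eq, Real.dist_eq, abs_of_nonneg (by linarith : 0 ≤ g n x - g n y),
        abs_of_nonpos (by linarith : x - y ≤ 0)]
      linarith
    · have hm := hanti n hy hx h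
      have hk := memK_lip (hg n) hy hx h
      rw [Real.dist_eq, Real.dist_eq, abs_of_nonpos (by linarith : g n x - g n y ≤ 0),
        abs_of_nonneg (by linarith : 0 ≤ x - y)]
      linarith
  haveI : CompactSpace (Icc (0:ℝ) 1) := isCompact_iff_compactSpace.mp isCompact_Icc
  set F : ℕ → (Icc (0:ℝ) 1 →ᵇ ℝ) := fun n =>
    BoundedContinuousFunction.mkOfCompact ⟨(Icc (0:ℝ) 1).restrict (g n), (hC n).restrict⟩
    with hF
  have hFapp : ∀ n (x : Icc (0:ℝ) 1), F n x = g n x := fun n x => rfl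
  have hcomp : IsCompact (closure (Set.range F)) := by
    apply BoundedContinuousFunction.arzela_ascoli (Icc (0:ℝ) 1) isCompact_Icc
    · rintro f x ⟨n, rfl⟩
      exact hmap n x x.2
    · apply Metric.equicontinuous_of_continuity_modulus (fun t => 5 * t)
      · have : Tendsto (fun t : ℝ => 5 * t) (nhds 0) (nhds (5 * 0)) :=
          (continuous_const.mul continuous_id).tendsto 0
        simpa using this
      · rintro x y ⟨f, n, rfl⟩
        rw [hFapp, hFapp, Subtype.dist_eq]
        exact hdist n x x.2 y y.2
  obtain ⟨L, hLmem, φ, hφ, hconvL⟩ :=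
    hcomp.tendsto_subseq (fun n => subset_closure (Set.mem_range_self n))
  set l : ℝ → ℝ := fun x => if hx : x ∈ Icc (0:ℝ) 1 then L ⟨x, hx⟩ else 0 with hl
  have hlval : ∀ x (hx : x ∈ Icc (0:ℝ) 1), l x = L ⟨x, hx⟩ := by
    intro x hx; simp only [hl, dif_pos hx]
  have hUnif : TendstoUniformlyOn (fun k => g (φ k)) l atTop (Icc 0 1) := by
    rw [Metric.tendstoUniformlyOn_iff]
    intro ε hε
    filter_upwards [(Metric.tendsto_nhds.mp hconvL) ε hε] with k hk x hx
    have hb : dist (g (φ k) x) (L ⟨x, hx⟩) ≤ dist (F (φ k)) L := by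
      have := BoundedContinuousFunction.dist_coe_le_dist (f := F (φ k)) (g := L) ⟨x, hx⟩
      rwa [hFapp] at this
    rw [hlval x hx, dist_comm]
    exact lt_of_le_of_lt hb hk
  have hPt : ∀ x ∈ Icc (0:ℝ) 1, Tendsto (fun k => g (φ k) x) atTop (𝓝 (l x)) :=
    fun x hx => hUnif.tendsto_at hx
  have hlmap : ∀ x ∈ Icc (0:ℝ) 1, l x ∈ Icc (0:ℝ) 1 := fun x hx =>
    isClosed_Icc.mem_of_tendsto (hPt x hx)
      (Filter.Eventually.of_forall fun k => hmap (φ k) x hx)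
  have hlanti : AntitoneOn l (Icc 0 1) := fun x hx y hy hxy =>
    le_of_tendsto_of_tendsto' (hPt y hy) (hPt x hx) fun k => hanti (φ k) hx hy hxy
  have h0mem : (0:ℝ) ∈ Icc (0:ℝ) 1 := ⟨le_refl 0, zero_le_one⟩
  have h1mem : (1:ℝ) ∈ Icc (0:ℝ) 1 := ⟨zero_le_one, le_refl 1⟩
  have hl0 : l 0 = 1 := by
    refine tendsto_nhds_unique (hPt 0 h0mem) ?_
    simpa [h0] using (tendsto_const_nhds : Tendsto (fun _ : ℕ => (1:ℝ)) atTop (𝓝 1))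
  have hl1 : l 1 = 0 := by
    refine tendsto_nhds_unique (hPt 1 h1mem) ?_
    simpa [h1] using (tendsto_const_nhds : Tendsto (fun _ : ℕ => (0:ℝ)) atTop (𝓝 0))
  have hlC : ContinuousOn l (Icc 0 1) := by
    rw [continuousOn_iff_continuous_restrict]
    have : (Icc (0:ℝ) 1).domRestrict l = ⇑L := by
      ext p; rw [Set.restrict_apply, hlval p.1 p.2]
    rw [this]; exact L.continuous
  have hlconv : ConvexOn ℝ (Icc 0 1) l := by
    refine ⟨convex_Icc 0 1, fun x hx y hy a b ha hb hab => ?_⟩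
    have hmem : a • x + b • y ∈ Icc (0:ℝ) 1 := (convex_Icc 0 1) hx hy ha hb hab
    refine le_of_tendsto_of_tendsto' (hPt _ hmem) ?_
      (fun k => (hconv (φ k)).2 hx hy ha hb hab)
    simp only [smul_eq_mul]
    exact ((hPt x hx).const_mul a).add ((hPt y hy).const_mul b)
  have hllb : ∀ x ∈ Icc (0:ℝ) 1, 1 - 5*x ≤ l x := fun x hx =>
    ge_of_tendsto' (hPt x hx) fun k => memK_lb (hg (φ k)) x hx
  have hTint : Tendsto (fun k => ∫ x in (0:ℝ)..1, g (φ k) x) atTop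
      (𝓝 (∫ x in (0:ℝ)..1, l x)) := by
    have huIoc : Set.uIoc (0:ℝ) 1 = Ioc 0 1 := uIoc_of_le zero_le_one
    apply intervalIntegral.tendsto_integral_filter_of_dominated_convergence (fun _ => (1:ℝ))
    · refine Filter.Eventually.of_forall fun k => ?_
      rw [huIoc]
      exact ((hC (φ k)).mono Ioc_subset_Icc_self).aestronglyMeasurable measurableSet_Ioc
    · refine Filter.Eventually.of_forall fun k => Filter.Eventually.of_forall fun x hx => ?_
      rw [huIoc] at hx
      have hm := hmap (φ k) x (Ioc_subset_Icc_self hx)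
      rw [Real.norm_eq_abs, abs_le]
      exact ⟨by linarith [hm.1], hm.2⟩
    · exact intervalIntegrable_const
    · refine Filter.Eventually.of_forall fun x hx => ?_
      rw [huIoc] at hx
      exact hPt x (Ioc_subset_Icc_self hx)
  have h5int : (1:ℝ)/5 ≤ ∫ x in (0:ℝ)..1, l x :=
    ge_of_tendsto' hTint fun k => hint (φ k)
  have hstride : (1:ℝ)/5 ≤ stride l := by
    have hmemS : (1:ℝ)/5 ∈ {α : ℝ | 0 ≤ α ∧ ∀ x ∈ Icc (0:ℝ) 1, α - x ≤ α * l x} := by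
      refine ⟨by norm_num, fun x hx => ?_⟩
      have := hllb x hx
      nlinarith
    have hbdd : BddAbove {α : ℝ | 0 ≤ α ∧ ∀ x ∈ Icc (0:ℝ) 1, α - x ≤ α * l x} := by
      refine ⟨1, fun α hα => ?_⟩
      have := hα.2 1 h1mem
      rw [hl1] at this; linarith
    exact le_csSup hbdd hmemS
  exact ⟨φ, hφ, l,
    ⟨⟨⟨⟨hlmap, hlanti, hl0, lt_of_lt_of_le (by norm_num) h5int⟩, hlC, hl1⟩, hlconv⟩,
      hstride, h5int⟩, hUnif⟩
end
end
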